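/- arXiv:math/0209082 — 2 statements merged into one kernel-verified Lean document; each statement's English description precedes it below -/
import Mathlib

section
/- If b = (v, y) ∈ W is self-dual, then ε_0(b) = 2·y_1 − min(y_1, v_1), where ε_0(b) = max{k : e_0^k b is defined} is computed using the tensor-product rule on W. -/
/-!
Each factor's `0`-string is read off one coordinate: `ε₀(v) = v_{2n}` and `φ₀(y) = y_{2n}`. The
tensor rule therefore lets `e₀` act on `v` while `v_{2n} > y_{2n}` and on `y` afterwards, so
`ε₀(b) = y₁ + (v_{2n} - y_{2n})₊`. Self-duality at `i = 2n` expresses `y₁` and `v₁` through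
`v_{2n}`, `y_{2n}` and `min(y₁, v₁)`; eliminating `v_{2n}` and `y_{2n}` gives the formula.
-/

namespace Stmt10

/-- An element of `W = B^{2n-1,s} ⊗ B^{1,s}` of type `A_{2n-1}^{(1)}`: a pair `b = (v, y)`. -/
abbrev V2 := (ℕ → ℕ) × (ℕ → ℕ)

/-- Iterate a partial operator `k` times. -/
def iterO {α : Type*} (g : α → Option α) : ℕ → α → Option α
  | 0, a => some a
  | k+1, a => (g a).bind (iterO g k)

/-- `max {k : g^k a is defined}`. -/
noncomputable def strM {α : Type*} (g : α → Option α) (a : α) : ℕ :=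
  sSup {k | (iterO g k a).isSome = true}

/-- The partial operator `e_i` on `B^{1,s}` (the `y`-side), `0 ≤ i ≤ 2n-1`. -/
def eY (n i : ℕ) (y : ℕ → ℕ) : Option (ℕ → ℕ) :=
  if i = 0 then
    if y 1 > 0 then
      some (Function.update (Function.update y 1 (y 1 - 1)) (2*n) (y (2*n) + 1))
    else none
  else if 1 ≤ i ∧ i ≤ 2*n - 1 then
    if y (i+1) > 0 then
      some (Function.update (Function.update y i (y i + 1)) (i+1) (y (i+1) - 1))
    else none
  else none

/-- The partial operator `f_i` on `B^{1,s}`, the partial inverse of `e_i`. -/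
def fY (n i : ℕ) (y : ℕ → ℕ) : Option (ℕ → ℕ) :=
  if i = 0 then
    if y (2*n) > 0 then
      some (Function.update (Function.update y 1 (y 1 + 1)) (2*n) (y (2*n) - 1))
    else none
  else if 1 ≤ i ∧ i ≤ 2*n - 1 then
    if y i > 0 then
      some (Function.update (Function.update y i (y i - 1)) (i+1) (y (i+1) + 1))
    else none
  else none

/-- The partial operator `e_i` on `B^{2n-1,s}` (the `v`-side), `0 ≤ i ≤ 2n-1`. -/
def eV (n i : ℕ) (v : ℕ → ℕ) : Option (ℕ → ℕ) :=
  if i = 0 then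
    if v (2*n) > 0 then
      some (Function.update (Function.update v (2*n) (v (2*n) - 1)) 1 (v 1 + 1))
    else none
  else if 1 ≤ i ∧ i ≤ 2*n - 1 then
    if v (2*n - i) > 0 then
      some (Function.update (Function.update v (2*n - i) (v (2*n - i) - 1))
              (2*n + 1 - i) (v (2*n + 1 - i) + 1))
    else none
  else none

/-- The partial operator `f_i` on `B^{2n-1,s}`, the partial inverse of `e_i`. -/
def fV (n i : ℕ) (v : ℕ → ℕ) : Option (ℕ → ℕ) :=
  if i = 0 then
    if v 1 > 0 then
      some (Function.update (Function.update v (2*n) (v (2*n) + 1)) 1 (v 1 - 1))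
    else none
  else if 1 ≤ i ∧ i ≤ 2*n - 1 then
    if v (2*n + 1 - i) > 0 then
      some (Function.update (Function.update v (2*n - i) (v (2*n - i) + 1))
              (2*n + 1 - i) (v (2*n + 1 - i) - 1))
    else none
  else none

/-- `ε_i` on the first tensor factor. -/
noncomputable def epsV (n i : ℕ) (v : ℕ → ℕ) : ℕ := strM (eV n i) v
/-- `φ_i` on the second tensor factor. -/
noncomputable def phiY (n i : ℕ) (y : ℕ → ℕ) : ℕ := strM (fY n i) y

/-- The tensor product rule for `e_i` on `W = B^{2n-1,s} ⊗ B^{1,s}`, `b = (v, y)`. -/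
noncomputable def eW (n i : ℕ) (b : V2) : Option V2 :=
  if epsV n i b.1 > phiY n i b.2 then (eV n i b.1).map (fun v' => (v', b.2))
  else (eY n i b.2).map (fun y' => (b.1, y'))

/-- The (dual) tensor product rule for `f_i` on `W`. -/
noncomputable def fW (n i : ℕ) (b : V2) : Option V2 :=
  if epsV n i b.1 ≥ phiY n i b.2 then (fV n i b.1).map (fun v' => (v', b.2))
  else (fY n i b.2).map (fun y' => (b.1, y'))

/-- `ε_i` on `W`. -/
noncomputable def epsW (n i : ℕ) (b : V2) : ℕ := strM (eW n i) b
/-- `φ_i` on `W`. -/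
noncomputable def phiW (n i : ℕ) (b : V2) : ℕ := strM (fW n i) b

/-- Membership in `W = B^{2n-1,s} ⊗ B^{1,s}`. -/
def Wmem (n s : ℕ) (b : V2) : Prop :=
  (∑ i ∈ Finset.Icc 1 (2*n), b.1 i) = s ∧ (∑ i ∈ Finset.Icc 1 (2*n), b.2 i) = s ∧
  (∀ i, b.1 i ≠ 0 → 1 ≤ i ∧ i ≤ 2*n) ∧ (∀ i, b.2 i ≠ 0 → 1 ≤ i ∧ i ≤ 2*n)

/-- `y_i` with the convention `y_{2n+1} := y_1`. -/
def yc (n : ℕ) (b : V2) (i : ℕ) : ℕ := if i = 2*n+1 then b.2 1 else b.2 i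
/-- `v_i` with the convention `v_{2n+1} := v_1`. -/
def vc (n : ℕ) (b : V2) (i : ℕ) : ℕ := if i = 2*n+1 then b.1 1 else b.1 i

/-- The self-duality condition `b^{∨*} = R(b)` in coordinates. -/
def selfDual (n : ℕ) (b : V2) : Prop :=
  ∀ i, 1 ≤ i → i ≤ 2*n →
    b.2 (2*n+1-i) = b.1 i - min (b.2 i) (b.1 i) + min (yc n b (i+1)) (vc n b (i+1)) ∧
    b.1 (2*n+1-i) = b.2 i - min (b.2 i) (b.1 i) + min (yc n b (i+1)) (vc n b (i+1))

/-- The element `u = u(Ŵ^{1,s})` with `v_{2n} = s`, `y_1 = s`. -/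
def uW (n s : ℕ) : V2 :=
  (fun i => if i = 2*n then s else 0, fun i => if i = 1 then s else 0)

section StringLength

variable {α : Type*} {g : α → Option α} (p : α → ℕ)

theorem iterO_isSome_iff_le_of_step (hnone : ∀ a, p a = 0 → g a = none)
    (hsome : ∀ a, 0 < p a → ∃ a', g a = some a' ∧ p a' = p a - 1) :
    ∀ k a, (iterO g k a).isSome = true ↔ k ≤ p a := by
  intro k
  induction k with
  | zero => simp [iterO]
  | succ k ih =>
    intro a
    rcases Nat.eq_zero_or_pos (p a) with hzero | hpos
    · simp [iterO, hnone a hzero, hzero]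
    · obtain ⟨a', hga, hpa'⟩ := hsome a hpos
      rw [iterO, hga, Option.bind_some, ih, hpa']
      omega

theorem strM_eq_of_step (hnone : ∀ a, p a = 0 → g a = none)
    (hsome : ∀ a, 0 < p a → ∃ a', g a = some a' ∧ p a' = p a - 1) (a : α) :
    strM g a = p a := by
  have hset : {k | (iterO g k a).isSome = true} = Set.Iic (p a) :=
    Set.ext fun k => iterO_isSome_iff_le_of_step p hnone hsome k a
  rw [strM, hset, csSup_Iic]

end StringLength

theorem epsV_zero (n : ℕ) (v : ℕ → ℕ) : epsV n 0 v = v (2*n) :=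
  strM_eq_of_step (g := eV n 0) (fun v => v (2*n)) (fun v hv => by simp [eV, hv])
    (fun v hv => ⟨_, by simp only [eV, hv]; rfl, by simp⟩) v

theorem phiY_zero (n : ℕ) (y : ℕ → ℕ) : phiY n 0 y = y (2*n) :=
  strM_eq_of_step (g := fY n 0) (fun y => y (2*n)) (fun y hy => by simp [fY, hy])
    (fun y hy => ⟨_, by simp only [fY, hy]; rfl, by simp⟩) y

theorem epsW_zero (n : ℕ) (b : V2) : epsW n 0 b = b.2 1 + (b.1 (2*n) - b.2 (2*n)) := by
  have h2n : 2*n ≠ 1 := by omega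
  refine strM_eq_of_step (g := eW n 0) (fun b => b.2 1 + (b.1 (2*n) - b.2 (2*n)))
    (fun b hb => ?_) (fun b hb => ?_) b
  · simp only [eW, epsV_zero, phiY_zero, if_neg (by omega : ¬ b.2 (2*n) < b.1 (2*n))]
    simp [eY, (by omega : b.2 1 = 0)]
  · by_cases hvy : b.2 (2*n) < b.1 (2*n)
    · refine ⟨(Function.update (Function.update b.1 (2*n) (b.1 (2*n) - 1)) 1 (b.1 1 + 1), b.2),
        by simp [eW, epsV_zero, phiY_zero, hvy, eV, (by omega : 0 < b.1 (2*n))], ?_⟩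
      simp only [Function.update_of_ne h2n, Function.update_self]
      omega
    · refine ⟨(b.1, Function.update (Function.update b.2 1 (b.2 1 - 1)) (2*n) (b.2 (2*n) + 1)),
        by simp [eW, epsV_zero, phiY_zero, hvy, eY, (by omega : 0 < b.2 1)], ?_⟩
      simp only [Function.update_of_ne h2n.symm, Function.update_self]
      omega

theorem selfDual.apply_two_mul {n : ℕ} {b : V2} (hsd : selfDual n b) (hn : 1 ≤ n) :
    b.2 1 = b.1 (2*n) - min (b.2 (2*n)) (b.1 (2*n)) + min (b.2 1) (b.1 1) ∧
    b.1 1 = b.2 (2*n) - min (b.2 (2*n)) (b.1 (2*n)) + min (b.2 1) (b.1 1) := by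
  have h := hsd (2*n) (by omega) le_rfl
  rwa [Nat.add_sub_cancel_left, yc, vc, if_pos rfl, if_pos rfl] at h

theorem statement10_general (n : ℕ) (hn : 2 ≤ n) (b : V2)
    (hsd : selfDual n b) :
    epsW n 0 b = 2 * b.2 1 - min (b.2 1) (b.1 1) := by
  obtain ⟨hy1, hv1⟩ := hsd.apply_two_mul (by omega)
  rw [epsW_zero]
  omega

theorem statement10 (n s : ℕ) (hn : 2 ≤ n) (hs : 1 ≤ s) (b : V2)
    (hb : Wmem n s b) (hsd : selfDual n b) :
    epsW n 0 b = 2 * b.2 1 - min (b.2 1) (b.1 1) :=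
  statement10_general n hn b hsd

end Stmt10
end

section
/- The map sending a rigged configuration (m, J) ∈ RC_C(L, λ) to (m̂, Ĵ) defined by m̂_i^{(a)} = m̂_i^{(2n−a)} = m_i^{(a)} and Ĵ^{(a,i)} = Ĵ^{(2n−a,i)} = J^{(a,i)} for 1 ≤ a ≤ n−1 and all i ≥ 1, m̂_{2i}^{(n)} = m_i^{(n)} and m̂_j^{(n)} = 0 for odd j, and Ĵ^{(n,2i)} = the partition obtained from J^{(n,i)} by doubling every part, is a bijection from RC_C(L, λ) onto RC^v(L, λ); moreover under this map the cocharge satisfies cc(m̂, Ĵ) = 2·cc(m, J). -/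
/-
Every quantity of type `A_{2n-1}` is a sum over `m̂` (or `Ĵ`) of a kernel, and a sum over `m̂`
is the sum over `m` of the kernel folded back along `m ↦ m̂`. The folded type `A` kernels are
the type `C` kernels, doubled in the middle row. Hence on the rows `a < n` and their mirrors the
vacancy numbers and the configuration condition of `(m̂, Ĵ)` are those of `(m, J)`, while the
middle row has `p̂_{2i}^{(n)} = 2 p_i^{(n)}`, `λ̂_n = 2 λ_n`, and the cocharge doubles.
The odd middle lengths carry no strings, and there `p̂^{(n)}` is concave in the length, so it is
nonnegative as soon as it is at the even lengths around it.
-/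

namespace Stmt15

/-- A finitely supported matrix `(m_i^{(a)})`, indexed by pairs `(a, i)`. -/
abbrev Mat := ℕ × ℕ →₀ ℕ
/-- A finitely supported matrix of partitions `(J^{(a,i)})`, each partition encoded as the
multiset of its parts. -/
abbrev Rig := ℕ × ℕ →₀ Multiset ℕ

/-- Support is contained in `{1,…,N} × {1,2,3,…}`. -/
def supIn (N : ℕ) (m : Mat) : Prop := ∀ q, m q ≠ 0 → 1 ≤ q.1 ∧ q.1 ≤ N ∧ 1 ≤ q.2
/-- Support is contained in `{1,…,N} × {1,2,3,…}`. -/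
def supInJ (N : ℕ) (J : Rig) : Prop := ∀ q, J q ≠ 0 → 1 ≤ q.1 ∧ q.1 ≤ N ∧ 1 ≤ q.2

/-- The normalized bilinear form `(α_a|α_b)` of type `C_n`. -/
def formC (n a b : ℕ) : ℚ :=
  if a = b then (if a = n then 2 else 1)
  else if a + 1 = b ∨ b + 1 = a then (if a = n ∨ b = n then -1 else -(1/2))
  else 0

/-- The scaling factors `t_a` of type `C_n`. -/
def tC (n a : ℕ) : ℕ := if a = n then 1 else 2

/-- The Cartan integers `A_{ab} = 2(α_a|α_b)/(α_a|α_a)` of type `C_n`. -/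
def cartanC (n a b : ℕ) : ℚ := 2 * formC n a b / formC n a a

/-- The bilinear form `(α_a|α_b) = 2δ_{ab} - δ_{|a-b|,1}` of type `A_{2n-1}`
(equal to its Cartan matrix; all scaling factors are 1). -/
def formA (a b : ℕ) : ℚ :=
  if a = b then 2 else if a + 1 = b ∨ b + 1 = a then -1 else 0

/-- The type `C_n` configuration condition for the data `(L, λ)`. -/
def configC (n : ℕ) (lam : ℕ → ℕ) (L m : Mat) : Prop :=
  ∀ a, 1 ≤ a → a ≤ n →
    (m.sum fun q c => (q.2 : ℚ) * c * cartanC n a q.1)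
      = (L.sum fun q c => if q.1 = a then (q.2 : ℚ) * c else 0) - lam a

/-- The type `C_n` vacancy numbers `p_i^{(a)}`. -/
def vacC (n : ℕ) (L m : Mat) (a i : ℕ) : ℚ :=
  (L.sum fun q c => if q.1 = a then ((min i q.2 : ℕ) : ℚ) * c else 0)
  - (m.sum fun q c => formC n a q.1 * ((min (tC n q.1 * i) (tC n a * q.2) : ℕ) : ℚ) * c)

/-- Admissibility in type `C_n`: all vacancy numbers are nonnegative. -/
def admC (n : ℕ) (L m : Mat) : Prop :=
  ∀ a i, 1 ≤ a → a ≤ n → 1 ≤ i → 0 ≤ vacC n L m a i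

/-- The rigging conditions in type `C_n`: `J^{(a,i)}` is a partition contained in an
`m_i^{(a)} × p_i^{(a)}` rectangle. -/
def rigC (n : ℕ) (L m : Mat) (J : Rig) : Prop :=
  ∀ a i, 1 ≤ a → a ≤ n → 1 ≤ i →
    (J (a,i)).card ≤ m (a,i) ∧ ∀ x ∈ J (a,i), 0 < x ∧ (x : ℚ) ≤ vacC n L m a i

/-- The quadratic part of the type `C_n` cocharge. -/
def ccC (n : ℕ) (m : Mat) : ℚ :=
  (1/2) * m.sum fun q c => m.sum fun r d =>
    formC n q.1 r.1 * ((min (tC n r.1 * q.2) (tC n q.1 * r.2) : ℕ) : ℚ) * c * d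

/-- `Σ_{a,i} |J^{(a,i)}|`. -/
def Jsize (J : Rig) : ℚ := J.sum fun _ ms => (ms.sum : ℚ)

/-- The set of type `C_n` rigged configurations for the data `(L, λ)`. -/
def RCC (n : ℕ) (lam : ℕ → ℕ) (L : Mat) : Set (Mat × Rig) :=
  {p | supIn n p.1 ∧ supInJ n p.2 ∧ configC n lam L p.1 ∧ admC n L p.1 ∧
       rigC n L p.1 p.2}

/-- The type `A_{2n-1}` configuration condition (index set `{1,…,N}` with `N = 2n-1`). -/
def configA (N : ℕ) (lam : ℕ → ℚ) (L m : Mat) : Prop :=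
  ∀ a, 1 ≤ a → a ≤ N →
    (m.sum fun q c => (q.2 : ℚ) * c * formA a q.1)
      = (L.sum fun q c => if q.1 = a then (q.2 : ℚ) * c else 0) - lam a

/-- The type `A_{2n-1}` vacancy numbers (all scaling factors are 1). -/
def vacA (L m : Mat) (a i : ℕ) : ℚ :=
  (L.sum fun q c => if q.1 = a then ((min i q.2 : ℕ) : ℚ) * c else 0)
  - (m.sum fun q c => formA a q.1 * ((min i q.2 : ℕ) : ℚ) * c)

/-- Admissibility in type `A_{2n-1}`. -/
def admA (N : ℕ) (L m : Mat) : Prop :=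
  ∀ a i, 1 ≤ a → a ≤ N → 1 ≤ i → 0 ≤ vacA L m a i

/-- The rigging conditions in type `A_{2n-1}`. -/
def rigA (N : ℕ) (L m : Mat) (J : Rig) : Prop :=
  ∀ a i, 1 ≤ a → a ≤ N → 1 ≤ i →
    (J (a,i)).card ≤ m (a,i) ∧ ∀ x ∈ J (a,i), 0 < x ∧ (x : ℚ) ≤ vacA L m a i

/-- The quadratic part of the type `A_{2n-1}` cocharge. -/
def ccA (m : Mat) : ℚ :=
  (1/2) * m.sum fun q c => m.sum fun r d =>
    formA q.1 r.1 * ((min q.2 r.2 : ℕ) : ℚ) * c * d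

/-- The transform `m ↦ m̂`: `m̂_i^{(a)} = m̂_i^{(2n-a)} = m_i^{(a)}` for `a ≤ n-1`,
`m̂_{2i}^{(n)} = m_i^{(n)}` and `m̂_j^{(n)} = 0` for odd `j`. -/
noncomputable def hatM (n : ℕ) (m : Mat) : Mat :=
  Finsupp.onFinset
    (Finset.range (2*n+1) ×ˢ Finset.range (2 * (m.support.sup Prod.snd) + 1))
    (fun q =>
      if 1 ≤ q.1 ∧ q.1 ≤ n - 1 then m q
      else if q.1 = n ∧ q.2 % 2 = 0 then m (n, q.2 / 2)
      else if n + 1 ≤ q.1 ∧ q.1 ≤ 2*n - 1 then m (2*n - q.1, q.2)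
      else 0)
    (by
      intro q hq
      obtain ⟨a, i⟩ := q
      simp only [Finset.mem_product, Finset.mem_range]
      dsimp only at hq
      split_ifs at hq with h1 h2 h3
      · have hs : ((a, i) : ℕ × ℕ) ∈ m.support := Finsupp.mem_support_iff.2 hq
        have hle : i ≤ m.support.sup Prod.snd := Finset.le_sup (f := Prod.snd) hs
        omega
      · have hs : ((n, i / 2) : ℕ × ℕ) ∈ m.support := Finsupp.mem_support_iff.2 hq
        have hle : i / 2 ≤ m.support.sup Prod.snd := Finset.le_sup (f := Prod.snd) hs
        omega
      · have hs : ((2*n - a, i) : ℕ × ℕ) ∈ m.support := Finsupp.mem_support_iff.2 hq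
        have hle : i ≤ m.support.sup Prod.snd := Finset.le_sup (f := Prod.snd) hs
        omega
      · exact absurd rfl hq)

/-- The transform `J ↦ Ĵ`: `Ĵ^{(a,i)} = Ĵ^{(2n-a,i)} = J^{(a,i)}` for `a ≤ n-1`, and
`Ĵ^{(n,2i)}` is obtained from `J^{(n,i)}` by doubling every part. -/
noncomputable def hatJ (n : ℕ) (J : Rig) : Rig :=
  Finsupp.onFinset
    (Finset.range (2*n+1) ×ˢ Finset.range (2 * (J.support.sup Prod.snd) + 1))
    (fun q =>
      if 1 ≤ q.1 ∧ q.1 ≤ n - 1 then J q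
      else if q.1 = n ∧ q.2 % 2 = 0 then (J (n, q.2 / 2)).map (fun x => 2 * x)
      else if n + 1 ≤ q.1 ∧ q.1 ≤ 2*n - 1 then J (2*n - q.1, q.2)
      else 0)
    (by
      intro q hq
      obtain ⟨a, i⟩ := q
      simp only [Finset.mem_product, Finset.mem_range]
      dsimp only at hq
      split_ifs at hq with h1 h2 h3
      · have hs : ((a, i) : ℕ × ℕ) ∈ J.support := Finsupp.mem_support_iff.2 hq
        have hle : i ≤ J.support.sup Prod.snd := Finset.le_sup (f := Prod.snd) hs
        omega
      · rw [Ne, Multiset.map_eq_zero] at hq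
        have hs : ((n, i / 2) : ℕ × ℕ) ∈ J.support := Finsupp.mem_support_iff.2 hq
        have hle : i / 2 ≤ J.support.sup Prod.snd := Finset.le_sup (f := Prod.snd) hs
        omega
      · have hs : ((2*n - a, i) : ℕ × ℕ) ∈ J.support := Finsupp.mem_support_iff.2 hq
        have hle : i ≤ J.support.sup Prod.snd := Finset.le_sup (f := Prod.snd) hs
        omega
      · exact absurd rfl hq)

/-- The weight `λ̂`: `λ̂_a = λ̂_{2n-a} = λ_a` for `a ≤ n-1`, `λ̂_n = 2λ_n`. -/
def hatLam (n : ℕ) (lam : ℕ → ℕ) (a : ℕ) : ℚ :=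
  if 1 ≤ a ∧ a ≤ n - 1 then lam a
  else if a = n then 2 * lam n
  else if n + 1 ≤ a ∧ a ≤ 2*n - 1 then lam (2*n - a)
  else 0

/-- The set `RC^v(L, λ)` of symmetric type `A_{2n-1}` rigged configurations for the
data `(L̂, λ̂)`. -/
def RCv (n : ℕ) (lam : ℕ → ℕ) (L : Mat) : Set (Mat × Rig) :=
  {p | supIn (2*n-1) p.1 ∧ supInJ (2*n-1) p.2 ∧
       configA (2*n-1) (hatLam n lam) (hatM n L) p.1 ∧
       admA (2*n-1) (hatM n L) p.1 ∧
       rigA (2*n-1) (hatM n L) p.1 p.2 ∧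
       (∀ a i, 1 ≤ a → a ≤ n - 1 → p.1 (a, i) = p.1 (2*n - a, i) ∧
          p.2 (a, i) = p.2 (2*n - a, i)) ∧
       (∀ j, j % 2 = 1 → p.1 (n, j) = 0) ∧
       (∀ i, ∀ x ∈ p.2 (n, i), x % 2 = 0)}

section HatFun

variable {M : Type*} [Zero M] {n : ℕ}

theorem fst_bounds {N : ℕ} {m : ℕ × ℕ →₀ M} (hm : ∀ q, m q ≠ 0 → 1 ≤ q.1 ∧ q.1 ≤ N ∧ 1 ≤ q.2)
    (q : ℕ × ℕ) (hq : m q ≠ 0) : 1 ≤ q.1 ∧ q.1 ≤ N :=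
  ⟨(hm q hq).1, (hm q hq).2.1⟩

def hatFun (n : ℕ) (φ : M → M) (m : ℕ × ℕ → M) (q : ℕ × ℕ) : M :=
  if 1 ≤ q.1 ∧ q.1 ≤ n - 1 then m q
  else if q.1 = n ∧ q.2 % 2 = 0 then φ (m (n, q.2 / 2))
  else if n + 1 ≤ q.1 ∧ q.1 ≤ 2*n - 1 then m (2*n - q.1, q.2)
  else 0

theorem coe_hatM (m : Mat) : ⇑(hatM n m) = hatFun n id m := rfl

theorem coe_hatJ (J : Rig) : ⇑(hatJ n J) = hatFun n (Multiset.map (2 * ·)) J := rfl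

variable {φ : M → M} {m : ℕ × ℕ → M}

theorem hatFun_of_lt {a : ℕ} (i : ℕ) (h1 : 1 ≤ a) (h2 : a < n) :
    hatFun n φ m (a, i) = m (a, i) :=
  if_pos ⟨h1, by omega⟩

theorem hatFun_mid (i : ℕ) : hatFun n φ m (n, 2 * i) = φ (m (n, i)) := by
  rw [hatFun, if_neg (by omega), if_pos ⟨rfl, by omega⟩, Nat.mul_div_cancel_left i two_pos]

theorem hatFun_mid_odd {j : ℕ} (hj : j % 2 = 1) : hatFun n φ m (n, j) = 0 := by
  rw [hatFun, if_neg (by omega), if_neg (by omega), if_neg (by omega)]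

theorem hatFun_of_gt {a : ℕ} (i : ℕ) (h1 : n < a) (h2 : a < 2 * n) :
    hatFun n φ m (a, i) = m (2*n - a, i) := by
  rw [hatFun, if_neg (by omega), if_neg (by omega), if_pos ⟨h1, by omega⟩]

theorem hatFun_eq_zero {a : ℕ} (i : ℕ) (h : a = 0 ∨ 2 * n ≤ a) (hn : a ≠ n) :
    hatFun n φ m (a, i) = 0 := by
  rw [hatFun, if_neg (by omega), if_neg (by omega), if_neg (by omega)]

theorem hatFun_mirror {a : ℕ} (i : ℕ) (h1 : 1 ≤ a) (h2 : a < n) :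
    hatFun n φ m (2*n - a, i) = hatFun n φ m (a, i) := by
  rw [hatFun_of_gt i (by omega) (by omega), hatFun_of_lt i h1 h2, Nat.sub_sub_self (by omega)]

theorem hatFun_ne_zero {q : ℕ × ℕ} (hφ : φ 0 = 0) (hq : hatFun n φ m q ≠ 0) :
    (1 ≤ q.1 ∧ q.1 < n ∧ m q ≠ 0) ∨ (q.1 = n ∧ q.2 % 2 = 0 ∧ m (n, q.2 / 2) ≠ 0) ∨
      (n < q.1 ∧ q.1 < 2 * n ∧ m (2*n - q.1, q.2) ≠ 0) := by
  unfold hatFun at hq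
  split_ifs at hq with h1 h2 h3
  · exact Or.inl ⟨h1.1, by omega, hq⟩
  · exact Or.inr (Or.inl ⟨h2.1, h2.2, fun h => hq (by rw [h, hφ])⟩)
  · exact Or.inr (Or.inr ⟨by omega, by omega, hq⟩)
  · exact absurd rfl hq

theorem hatFun_support (hφ : φ 0 = 0) (hm : ∀ q, m q ≠ 0 → 1 ≤ q.1 ∧ q.1 ≤ n ∧ 1 ≤ q.2)
    (q : ℕ × ℕ) (hq : hatFun n φ m q ≠ 0) : 1 ≤ q.1 ∧ q.1 ≤ 2*n - 1 ∧ 1 ≤ q.2 := by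
  rcases hatFun_ne_zero hφ hq with ⟨h1, h2, h⟩ | ⟨h1, h2, h⟩ | ⟨h1, h2, h⟩
  · exact ⟨h1, by omega, (hm _ h).2.2⟩
  · have := hm _ h; dsimp only at this; omega
  · have := hm _ h; dsimp only at this; omega

/-- The entries of `m̂` at which the entry `m q` reappears. -/
def hatIdx (n : ℕ) (q : ℕ × ℕ) : Finset (ℕ × ℕ) :=
  if q.1 = n then {(n, 2 * q.2)} else {q, (2*n - q.1, q.2)}

theorem support_subset_biUnion_hatIdx [DecidableEq M] (h m : ℕ × ℕ →₀ M)
    (hh : ⇑h = hatFun n φ m) (hφ : φ 0 = 0) (hm : ∀ q, m q ≠ 0 → 1 ≤ q.1 ∧ q.1 ≤ n) :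
    h.support ⊆ m.support.biUnion (hatIdx n) := by
  intro r hr
  rw [Finsupp.mem_support_iff, hh] at hr
  simp only [Finset.mem_biUnion, Finsupp.mem_support_iff, hatIdx]
  rcases hatFun_ne_zero hφ hr with ⟨-, h2, h⟩ | ⟨h1, h2, h⟩ | ⟨h1, h2, h⟩
  · exact ⟨r, h, by simp [h2.ne]⟩
  · refine ⟨(n, r.2 / 2), h, ?_⟩
    simp only [if_true, Finset.mem_singleton]
    exact Prod.ext h1 (by omega)
  · have hb := (hm _ h).2
    refine ⟨(2*n - r.1, r.2), h, ?_⟩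
    simp only [show 2*n - r.1 ≠ n by omega, if_false, Finset.mem_insert, Finset.mem_singleton]
    exact Or.inr (Prod.ext (by omega) rfl)

theorem pairwiseDisjoint_hatIdx {s : Set (ℕ × ℕ)} (hs : ∀ q ∈ s, 1 ≤ q.1 ∧ q.1 ≤ n) :
    s.PairwiseDisjoint (hatIdx n) := by
  rintro ⟨a, i⟩ hq ⟨a', i'⟩ hq' hne
  have hb := hs _ hq
  have hb' := hs _ hq'
  refine Finset.disjoint_left.2 fun r hr hr' => hne ?_
  simp only [hatIdx] at hr hr' hb hb'
  split_ifs at hr hr' <;> simp only [Finset.mem_insert, Finset.mem_singleton] at hr hr' <;>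
    simp only [Prod.ext_iff] at hr hr' ⊢ <;> omega

variable {N : Type*} [AddCommMonoid N]

theorem sum_hatFun (h m : ℕ × ℕ →₀ M) (hh : ⇑h = hatFun n φ m) (hφ : φ 0 = 0)
    (hm : ∀ q, m q ≠ 0 → 1 ≤ q.1 ∧ q.1 ≤ n) (f : ℕ × ℕ → M → N) (hf : ∀ q, f q 0 = 0) :
    h.sum f = m.sum fun q c =>
      if q.1 = n then f (n, 2 * q.2) (φ c) else f q c + f (2*n - q.1, q.2) c := by
  classical
  rw [Finsupp.sum_of_support_subset h (support_subset_biUnion_hatIdx h m hh hφ hm) f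
      fun q _ => hf q,
    Finset.sum_biUnion (pairwiseDisjoint_hatIdx fun q hq => hm q (Finsupp.mem_support_iff.1 hq))]
  refine Finset.sum_congr rfl fun ⟨a, i⟩ hq => ?_
  have hb := hm _ (Finsupp.mem_support_iff.1 hq)
  dsimp only at hb
  simp only [hatIdx, hh]
  split_ifs with ha
  · subst ha
    rw [Finset.sum_singleton, hatFun_mid]
  · rw [Finset.sum_pair (by simp only [ne_eq, Prod.ext_iff]; omega), hatFun_of_lt i hb.1 (by omega),
      hatFun_mirror i hb.1 (by omega), hatFun_of_lt i hb.1 (by omega)]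

end HatFun

section UnHat

variable {M : Type*} [Zero M] {n : ℕ}

noncomputable def unHat (n : ℕ) (ψ : M → M) (hψ : ψ 0 = 0) (m' : ℕ × ℕ →₀ M) : ℕ × ℕ →₀ M :=
  Finsupp.onFinset (m'.support.image fun r => (r.1, if r.1 = n then r.2 / 2 else r.2))
    (fun q => if q.1 = n then ψ (m' (n, 2 * q.2)) else if 1 ≤ q.1 ∧ q.1 < n then m' q else 0)
    (by
      classical
      intro q hq
      simp only [Finset.mem_image, Finsupp.mem_support_iff]
      split_ifs at hq with h1 h2
      · refine ⟨(n, 2 * q.2), fun h => hq (by rw [h, hψ]), Prod.ext h1.symm ?_⟩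
        simp
      · exact ⟨q, hq, by simp [h1]⟩
      · exact absurd rfl hq)

variable {ψ φ : M → M} {hψ : ψ 0 = 0}

theorem unHat_apply (m' : ℕ × ℕ →₀ M) (q : ℕ × ℕ) :
    unHat n ψ hψ m' q =
      if q.1 = n then ψ (m' (n, 2 * q.2)) else if 1 ≤ q.1 ∧ q.1 < n then m' q else 0 := rfl

theorem unHat_support (m' : ℕ × ℕ →₀ M)
    (hm' : ∀ q, m' q ≠ 0 → 1 ≤ q.1 ∧ q.1 ≤ 2*n - 1 ∧ 1 ≤ q.2) (q : ℕ × ℕ)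
    (hq : unHat n ψ hψ m' q ≠ 0) : 1 ≤ q.1 ∧ q.1 ≤ n ∧ 1 ≤ q.2 := by
  rw [unHat_apply] at hq
  split_ifs at hq with h1 h2
  · have := hm' (n, 2 * q.2) fun h => hq (by rw [h, hψ])
    dsimp only at this
    omega
  · exact ⟨h2.1, h2.2.le, (hm' q hq).2.2⟩
  · exact absurd rfl hq

theorem unHat_hatFun (h m : ℕ × ℕ →₀ M) (hh : ⇑h = hatFun n φ m) (hψφ : ∀ x, ψ (φ x) = x)
    (hm : ∀ q, m q ≠ 0 → 1 ≤ q.1 ∧ q.1 ≤ n) : unHat n ψ hψ h = m := by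
  ext ⟨a, i⟩
  rw [unHat_apply, hh]
  dsimp only
  split_ifs with h1 h2
  · rw [hatFun_mid, hψφ, h1]
  · exact hatFun_of_lt i h2.1 h2.2
  · by_contra hne
    have := hm _ (Ne.symm hne)
    omega

theorem hatFun_unHat (m' : ℕ × ℕ →₀ M)
    (hm' : ∀ q, m' q ≠ 0 → 1 ≤ q.1 ∧ q.1 ≤ 2*n - 1)
    (hsymm : ∀ a i, 1 ≤ a → a ≤ n - 1 → m' (a, i) = m' (2*n - a, i))
    (hodd : ∀ j, j % 2 = 1 → m' (n, j) = 0) (hφψ : ∀ i, φ (ψ (m' (n, 2 * i))) = m' (n, 2 * i)) :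
    hatFun n φ (unHat n ψ hψ m') = ⇑m' := by
  ext ⟨a, i⟩
  rcases (by omega : a = n ∨ (a ≠ n ∧ (a = 0 ∨ 2 * n ≤ a)) ∨ (1 ≤ a ∧ a < n) ∨
      (n < a ∧ a < 2 * n)) with rfl | ⟨hn, h⟩ | ⟨h1, h2⟩ | ⟨h1, h2⟩
  · rcases Nat.even_or_odd' i with ⟨k, rfl | rfl⟩
    · rw [hatFun_mid, unHat_apply, if_pos rfl, hφψ]
    · rw [hatFun_mid_odd (by omega), hodd _ (by omega)]
  · rw [hatFun_eq_zero i h hn]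
    exact (not_ne_iff.1 fun hne => by have := hm' _ hne; omega).symm
  · rw [hatFun_of_lt i h1 h2, unHat_apply, if_neg h2.ne, if_pos ⟨h1, h2⟩]
  · rw [hatFun_of_gt i h1 h2, unHat_apply, if_neg (by omega), if_pos ⟨by omega, by omega⟩,
      hsymm _ i (by omega) (by omega), Nat.sub_sub_self h2.le]

end UnHat

section Fold

variable {n : ℕ}

/-- The pull-back along `m ↦ m̂` of a function on the type `A_{2n-1}` indices:
`Σ_q f q * m̂ q = Σ_q foldHat n f q * m q`. -/
def foldHat (n : ℕ) (g : ℕ × ℕ → ℚ) (q : ℕ × ℕ) : ℚ :=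
  if q.1 = n then g (n, 2 * q.2) else g q + g (2*n - q.1, q.2)

theorem foldHat_of_eq (g : ℕ × ℕ → ℚ) {q : ℕ × ℕ} (hq : q.1 = n) :
    foldHat n g q = g (n, 2 * q.2) := if_pos hq

theorem foldHat_of_ne (g : ℕ × ℕ → ℚ) {q : ℕ × ℕ} (hq : q.1 ≠ n) :
    foldHat n g q = g q + g (2*n - q.1, q.2) := if_neg hq

theorem sum_hatM {m : Mat} (hm : supIn n m) (g : ℕ × ℕ → ℚ) :
    ((hatM n m).sum fun r c => g r * c) = m.sum fun q c => foldHat n g q * c := by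
  rw [sum_hatFun _ m (coe_hatM m) rfl (fst_bounds hm) _
    (fun q => by rw [Nat.cast_zero, mul_zero])]
  refine Finsupp.sum_congr fun q _ => ?_
  unfold foldHat
  split_ifs <;> simp only [id, add_mul]

theorem foldHat_mirror {g g' : ℕ × ℕ → ℚ} (h : ∀ b k, b ≤ 2 * n → g' (2*n - b, k) = g (b, k))
    {q : ℕ × ℕ} (hq : q.1 ≤ n) : foldHat n g' q = foldHat n g q := by
  unfold foldHat
  split_ifs with hqn
  · simpa [Nat.two_mul] using h n (2 * q.2) (by omega)
  · have e : g' q = g (2*n - q.1, q.2) := by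
      simpa [Nat.sub_sub_self (show q.1 ≤ 2 * n by omega)] using h (2*n - q.1) q.2 (by omega)
    rw [e, h q.1 q.2 (by omega), add_comm]

def kerA (q r : ℕ × ℕ) : ℚ := formA q.1 r.1 * ((min q.2 r.2 : ℕ) : ℚ)

def kerC (n : ℕ) (q r : ℕ × ℕ) : ℚ :=
  formC n q.1 r.1 * ((min (tC n r.1 * q.2) (tC n q.1 * r.2) : ℕ) : ℚ)

theorem kerA_mirror {a b : ℕ} (i k : ℕ) (ha : a ≤ 2 * n) (hb : b ≤ 2 * n) :
    kerA (2*n - a, i) (2*n - b, k) = kerA (a, i) (b, k) := by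
  simp only [kerA, formA]
  split_ifs <;> first | (exfalso; omega) | rfl

theorem foldHat_kerA_of_lt {a b : ℕ} (i k : ℕ) (ha : 1 ≤ a) (ha' : a < n) (hb : b ≤ n) :
    foldHat n (kerA (a, i)) (b, k) = kerC n (a, i) (b, k) := by
  simp only [foldHat, kerA, kerC, formA, formC, tC]
  split_ifs <;> simp only [one_mul, Nat.mul_min_mul_left] at * <;>
    first | (exfalso; omega) | (exfalso; tauto) | (push_cast; ring)

theorem foldHat_kerA_mid {b : ℕ} (i k : ℕ) (hb : b ≤ n) :
    foldHat n (kerA (n, 2 * i)) (b, k) = 2 * kerC n (n, i) (b, k) := by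
  simp only [foldHat, kerA, kerC, formA, formC, tC]
  split_ifs <;> simp only [one_mul, Nat.mul_min_mul_left] at * <;>
    first | (exfalso; omega) | (exfalso; tauto) | (push_cast; ring)

end Fold

section Rows

variable {n : ℕ}

def rowMin (q r : ℕ × ℕ) : ℚ := if r.1 = q.1 then ((min q.2 r.2 : ℕ) : ℚ) else 0

theorem vacA_eq (L' m' : Mat) (a i : ℕ) :
    vacA L' m' a i =
      (L'.sum fun r c => rowMin (a, i) r * c) - m'.sum fun r c => kerA (a, i) r * c := by
  simp only [vacA, rowMin, kerA, ite_mul, zero_mul]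

theorem vacC_eq (L m : Mat) (a i : ℕ) :
    vacC n L m a i =
      (L.sum fun r c => rowMin (a, i) r * c) - m.sum fun r c => kerC n (a, i) r * c := by
  simp only [vacC, rowMin, kerC, ite_mul, zero_mul]

variable {L m : Mat}

theorem vacA_hatM_of_lt (hL : supIn n L) (hm : supIn n m) {a : ℕ} (i : ℕ) (ha : 1 ≤ a)
    (ha' : a < n) :
    vacA (hatM n L) (hatM n m) a i = vacC n L m a i := by
  rw [vacA_eq, vacC_eq, sum_hatM hL, sum_hatM hm]
  congr 1 <;> refine Finsupp.sum_congr fun ⟨b, k⟩ hq => ?_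
  · have := hL _ (Finsupp.mem_support_iff.1 hq)
    simp only [foldHat, rowMin] at this ⊢
    split_ifs <;> first | (exfalso; omega) | ring
  · rw [foldHat_kerA_of_lt i k ha ha' (hm _ (Finsupp.mem_support_iff.1 hq)).2.1]

theorem vacA_hatM_mid (hL : supIn n L) (hm : supIn n m) (i : ℕ) :
    vacA (hatM n L) (hatM n m) n (2 * i) = 2 * vacC n L m n i := by
  rw [vacA_eq, vacC_eq, sum_hatM hL, sum_hatM hm, mul_sub, Finsupp.mul_sum, Finsupp.mul_sum]
  congr 1 <;> refine Finsupp.sum_congr fun ⟨b, k⟩ hq => ?_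
  · have := hL _ (Finsupp.mem_support_iff.1 hq)
    simp only [foldHat, rowMin] at this ⊢
    split_ifs <;> first | (exfalso; omega) | (rw [Nat.mul_min_mul_left]; push_cast; ring) | ring
  · rw [foldHat_kerA_mid i k (hm _ (Finsupp.mem_support_iff.1 hq)).2.1, mul_assoc]

theorem vacA_hatM_mirror (hL : supIn n L) (hm : supIn n m) {a : ℕ} (i : ℕ) (ha : a ≤ 2 * n) :
    vacA (hatM n L) (hatM n m) (2*n - a) i = vacA (hatM n L) (hatM n m) a i := by
  rw [vacA_eq, vacA_eq, sum_hatM hL, sum_hatM hm, sum_hatM hL, sum_hatM hm]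
  congr 1
  · refine Finsupp.sum_congr fun q hq => ?_
    rw [foldHat_mirror (fun b k hb => ?_) (hL _ (Finsupp.mem_support_iff.1 hq)).2.1]
    simp only [rowMin]
    split_ifs <;> first | (exfalso; omega) | rfl
  · refine Finsupp.sum_congr fun q hq => ?_
    rw [foldHat_mirror (fun b k hb => kerA_mirror i k ha hb)
      (hm _ (Finsupp.mem_support_iff.1 hq)).2.1]

end Rows

section Weights

variable {n : ℕ}

def weightA (L' m' : Mat) (a : ℕ) : ℚ :=
  (L'.sum fun r c => (if r.1 = a then (r.2 : ℚ) else 0) * c) -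
    m'.sum fun r c => formA a r.1 * r.2 * c

def weightC (n : ℕ) (L m : Mat) (a : ℕ) : ℚ :=
  (L.sum fun r c => (if r.1 = a then (r.2 : ℚ) else 0) * c) -
    m.sum fun r c => cartanC n a r.1 * r.2 * c

theorem configA_iff (N : ℕ) (lam : ℕ → ℚ) (L' m' : Mat) :
    configA N lam L' m' ↔ ∀ a, 1 ≤ a → a ≤ N → weightA L' m' a = lam a := by
  refine forall₃_congr fun a _ _ => ?_
  rw [weightA, show (m'.sum fun r c => formA a r.1 * r.2 * c) =
    m'.sum fun r c => (r.2 : ℚ) * c * formA a r.1 from Finsupp.sum_congr fun _ _ => by ring]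
  simp only [ite_mul, zero_mul]
  constructor <;> intro h <;> linarith

theorem configC_iff (lam : ℕ → ℕ) (L m : Mat) :
    configC n lam L m ↔ ∀ a, 1 ≤ a → a ≤ n → weightC n L m a = lam a := by
  refine forall₃_congr fun a _ _ => ?_
  rw [weightC, show (m.sum fun r c => cartanC n a r.1 * r.2 * c) =
    m.sum fun r c => (r.2 : ℚ) * c * cartanC n a r.1 from Finsupp.sum_congr fun _ _ => by ring]
  simp only [ite_mul, zero_mul]
  constructor <;> intro h <;> linarith

variable {L m : Mat}

theorem weightA_hatM_of_lt (hL : supIn n L) (hm : supIn n m) {a : ℕ} (ha : 1 ≤ a) (ha' : a < n) :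
    weightA (hatM n L) (hatM n m) a = weightC n L m a := by
  rw [weightA, weightC, sum_hatM hL, sum_hatM hm]
  congr 1 <;> refine Finsupp.sum_congr fun ⟨b, k⟩ hq => ?_
  · have := hL _ (Finsupp.mem_support_iff.1 hq)
    simp only [foldHat] at this ⊢
    split_ifs <;> first | (exfalso; omega) | ring
  · have := hm _ (Finsupp.mem_support_iff.1 hq)
    simp only [foldHat, formA, cartanC, formC] at this ⊢
    split_ifs <;> first | (exfalso; omega) | (exfalso; tauto) | (push_cast; ring)

theorem weightA_hatM_mid (hL : supIn n L) (hm : supIn n m) :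
    weightA (hatM n L) (hatM n m) n = 2 * weightC n L m n := by
  rw [weightA, weightC, sum_hatM hL, sum_hatM hm, mul_sub, Finsupp.mul_sum, Finsupp.mul_sum]
  congr 1 <;> refine Finsupp.sum_congr fun ⟨b, k⟩ hq => ?_
  · have := hL _ (Finsupp.mem_support_iff.1 hq)
    simp only [foldHat] at this ⊢
    split_ifs <;> first | (exfalso; omega) | (push_cast; ring)
  · have := hm _ (Finsupp.mem_support_iff.1 hq)
    simp only [foldHat, formA, cartanC, formC] at this ⊢
    split_ifs <;> first | (exfalso; omega) | (exfalso; tauto) | (push_cast; ring)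

theorem weightA_hatM_mirror (hL : supIn n L) (hm : supIn n m) {a : ℕ} (ha : a ≤ 2 * n) :
    weightA (hatM n L) (hatM n m) (2*n - a) = weightA (hatM n L) (hatM n m) a := by
  rw [weightA, weightA, sum_hatM hL, sum_hatM hm, sum_hatM hL, sum_hatM hm]
  congr 1 <;> refine Finsupp.sum_congr fun q hq => ?_
  · rw [foldHat_mirror (fun b k hb => ?_) (hL _ (Finsupp.mem_support_iff.1 hq)).2.1]
    split_ifs <;> first | (exfalso; omega) | rfl
  · rw [foldHat_mirror (fun b k hb => ?_) (hm _ (Finsupp.mem_support_iff.1 hq)).2.1]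
    simp only [formA]
    split_ifs <;> first | (exfalso; omega) | rfl

end Weights

section Concavity

theorem formA_nonpos {a b : ℕ} (h : a ≠ b) : formA a b ≤ 0 := by
  unfold formA
  split_ifs <;> first | exact absurd ‹a = b› h | norm_num

/-- The second difference in `i` of `vacA L' m' a` at `i + 1` is
`-L'_{i+1}^{(a)} + Σ_b (α_a|α_b) m'^{(b)}_{i+1}`, where only the term `b = a` can be positive. -/
theorem vacA_add_vacA_le (L' m' : Mat) (a i : ℕ) (hm : m' (a, i + 1) = 0) :
    vacA L' m' a i + vacA L' m' a (i + 2) ≤ 2 * vacA L' m' a (i + 1) := by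
  have hL : ((L'.sum fun r c => rowMin (a, i) r * c) + L'.sum fun r c => rowMin (a, i + 2) r * c)
      ≤ 2 * L'.sum fun r c => rowMin (a, i + 1) r * c := by
    rw [← Finsupp.sum_add, Finsupp.mul_sum]
    refine Finset.sum_le_sum fun r _ => ?_
    simp only [rowMin]
    split_ifs
    · have h : ((min i r.2 : ℕ) : ℚ) + (min (i + 2) r.2 : ℕ) ≤ 2 * (min (i + 1) r.2 : ℕ) := by
        exact_mod_cast (by omega : min i r.2 + min (i + 2) r.2 ≤ 2 * min (i + 1) r.2)
      nlinarith [(L' r).cast_nonneg (α := ℚ)]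
    · simp
  have hM : 2 * (m'.sum fun r c => kerA (a, i + 1) r * c)
      ≤ (m'.sum fun r c => kerA (a, i) r * c) + m'.sum fun r c => kerA (a, i + 2) r * c := by
    rw [← Finsupp.sum_add, Finsupp.mul_sum]
    refine Finset.sum_le_sum fun ⟨b, k⟩ hr => ?_
    simp only [kerA]
    by_cases hk : k = i + 1
    · subst hk
      have hb : a ≠ b := fun h => Finsupp.mem_support_iff.1 hr (h ▸ hm)
      have := formA_nonpos hb
      simp only [min_self, min_eq_left (Nat.le_succ i), min_eq_right (Nat.le_succ (i + 1))]
      push_cast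
      nlinarith [(m' (b, i + 1)).cast_nonneg (α := ℚ)]
    · have h : ((min i k : ℕ) : ℚ) + (min (i + 2) k : ℕ) = 2 * (min (i + 1) k : ℕ) := by
        exact_mod_cast (by omega : min i k + min (i + 2) k = 2 * min (i + 1) k)
      linear_combination (-(formA a b) * m' (b, k)) * h
  rw [vacA_eq, vacA_eq, vacA_eq]
  linarith

theorem vacA_zero (L' m' : Mat) (a : ℕ) : vacA L' m' a 0 = 0 := by
  simp [vacA]

end Concavity

section Cocharge

variable {n : ℕ}

theorem foldHat_finsuppSum (m : Mat) (F : ℕ × ℕ → ℕ × ℕ → ℚ) (q : ℕ × ℕ) :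
    foldHat n (fun q' => m.sum fun r d => F q' r * d) q
      = m.sum fun r d => foldHat n (fun q' => F q' r) q * d := by
  unfold foldHat
  split_ifs
  · rfl
  · rw [← Finsupp.sum_add]
    exact Finsupp.sum_congr fun _ _ => by ring

theorem foldHat_foldHat_kerA {q r : ℕ × ℕ} (hq : 1 ≤ q.1) (hq' : q.1 ≤ n) (hr : r.1 ≤ n) :
    foldHat n (fun q' => foldHat n (kerA q') r) q = 2 * kerC n q r := by
  obtain ⟨a, j⟩ := q
  obtain ⟨b, k⟩ := r
  dsimp only at hq hq' hr
  by_cases ha : a = n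
  · rw [foldHat_of_eq _ ha]
    subst ha
    exact foldHat_kerA_mid j k hr
  · rw [foldHat_of_ne _ ha, foldHat_mirror (fun b' k' hb' => kerA_mirror j k' (by omega) hb') hr,
      foldHat_kerA_of_lt j k hq (by omega) hr]
    ring

theorem ccA_hatM {m : Mat} (hm : supIn n m) : ccA (hatM n m) = 2 * ccC n m := by
  have inner : ∀ q c, ((hatM n m).sum fun r d => kerA q r * c * d)
      = (m.sum fun r d => foldHat n (kerA q) r * d) * c := by
    intro q c
    rw [← sum_hatM hm, Finsupp.sum_mul]
    exact Finsupp.sum_congr fun _ _ => by ring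
  calc ccA (hatM n m)
      = 1/2 * (hatM n m).sum fun q c => (hatM n m).sum fun r d => kerA q r * c * d := rfl
    _ = 1/2 * m.sum fun q c =>
          (m.sum fun r d => foldHat n (fun q' => foldHat n (kerA q') r) q * d) * c := by
        simp only [inner, sum_hatM hm, foldHat_finsuppSum]
    _ = 2 * ccC n m := by
        rw [ccC, mul_left_comm]
        congr 1
        rw [Finsupp.mul_sum]
        refine Finsupp.sum_congr fun q hq => ?_
        have hq := hm q (Finsupp.mem_support_iff.1 hq)
        rw [Finsupp.sum_mul, Finsupp.mul_sum]
        refine Finsupp.sum_congr fun r hr => ?_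
        rw [foldHat_foldHat_kerA hq.1 hq.2.1 (hm r (Finsupp.mem_support_iff.1 hr)).2.1, kerC]
        ring

theorem Jsize_hatJ {J : Rig} (hJ : supInJ n J) : Jsize (hatJ n J) = 2 * Jsize J := by
  rw [Jsize, Jsize, sum_hatFun _ J (coe_hatJ J) (Multiset.map_zero _)
    (fst_bounds hJ) _ (fun _ => by simp), Finsupp.sum, Finsupp.sum, Finset.mul_sum]
  refine Finset.sum_congr rfl fun q _ => ?_
  split_ifs
  · rw [Multiset.sum_map_mul_left, Multiset.map_id']
    push_cast
    rfl
  · ring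

end Cocharge

section Conditions

variable {n : ℕ} {L m : Mat} {J : Rig}

theorem forall_rowsA_iff (hn : 1 ≤ n) {P Q : ℕ → Prop} (hlow : ∀ a, 1 ≤ a → a < n → (P a ↔ Q a))
    (hmid : P n ↔ Q n) (hmirror : ∀ a, 1 ≤ a → a < n → (P (2*n - a) ↔ P a)) :
    (∀ a, 1 ≤ a → a ≤ 2*n - 1 → P a) ↔ ∀ a, 1 ≤ a → a ≤ n → Q a := by
  constructor
  · intro h a h1 h2
    rcases h2.lt_or_eq with h2 | rfl
    · exact (hlow a h1 h2).1 (h a h1 (by omega))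
    · exact hmid.1 (h _ h1 (by omega))
  · intro h a h1 h2
    rcases lt_trichotomy a n with h3 | rfl | h3
    · exact (hlow a h1 h3).2 (h a h1 h3.le)
    · exact hmid.2 (h _ h1 le_rfl)
    · have := (hmirror (2*n - a) (by omega) (by omega)).2
        ((hlow _ (by omega) (by omega)).2 (h _ (by omega) (by omega)))
      rwa [Nat.sub_sub_self (by omega)] at this

theorem configA_hatM_iff (hn : 1 ≤ n) (lam : ℕ → ℕ) (hL : supIn n L) (hm : supIn n m) :
    configA (2*n - 1) (hatLam n lam) (hatM n L) (hatM n m) ↔ configC n lam L m := by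
  rw [configA_iff, configC_iff]
  refine forall_rowsA_iff hn (fun a h1 h2 => ?_) ?_ (fun a h1 h2 => ?_)
  · rw [weightA_hatM_of_lt hL hm h1 h2, hatLam, if_pos ⟨h1, by omega⟩]
  · rw [weightA_hatM_mid hL hm, hatLam, if_neg (by omega), if_pos rfl]
    constructor <;> intro h <;> linarith
  · rw [weightA_hatM_mirror hL hm (by omega), hatLam, hatLam, if_neg (by omega), if_neg (by omega),
      if_pos ⟨by omega, by omega⟩, if_pos ⟨h1, by omega⟩, Nat.sub_sub_self (by omega)]

theorem vacA_hatM_mid_nonneg_iff (hL : supIn n L) (hm : supIn n m) :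
    (∀ i, 1 ≤ i → 0 ≤ vacA (hatM n L) (hatM n m) n i) ↔ ∀ i, 1 ≤ i → 0 ≤ vacC n L m n i := by
  constructor
  · intro h i hi
    have := h (2 * i) (by omega)
    rw [vacA_hatM_mid hL hm] at this
    linarith
  · intro h i hi
    have heven : ∀ k, 0 ≤ vacA (hatM n L) (hatM n m) n (2 * k) := by
      intro k
      rcases Nat.eq_zero_or_pos k with rfl | hk
      · exact (vacA_zero _ _ _).ge
      · rw [vacA_hatM_mid hL hm]
        linarith [h k hk]
    obtain ⟨k, rfl | rfl⟩ := Nat.even_or_odd' i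
    · exact heven k
    · have hodd : hatM n m (n, 2 * k + 1) = 0 := by
        rw [coe_hatM, hatFun_mid_odd (by omega)]
      have := vacA_add_vacA_le (hatM n L) (hatM n m) n (2 * k) hodd
      rw [show 2 * k + 2 = 2 * (k + 1) by ring] at this
      linarith [heven k, heven (k + 1)]

theorem admA_hatM_iff (hn : 1 ≤ n) (hL : supIn n L) (hm : supIn n m) :
    admA (2*n - 1) (hatM n L) (hatM n m) ↔ admC n L m :=
  calc _ ↔ ∀ a, 1 ≤ a → a ≤ 2*n - 1 → ∀ i, 1 ≤ i → 0 ≤ vacA (hatM n L) (hatM n m) a i :=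
        ⟨fun h a h1 h2 i hi => h a i h1 h2 hi, fun h a i h1 h2 hi => h a h1 h2 i hi⟩
    _ ↔ ∀ a, 1 ≤ a → a ≤ n → ∀ i, 1 ≤ i → 0 ≤ vacC n L m a i :=
        forall_rowsA_iff hn (fun a h1 h2 => by simp only [vacA_hatM_of_lt hL hm _ h1 h2])
          (vacA_hatM_mid_nonneg_iff hL hm)
          (fun a h1 h2 => by simp only [fun i => vacA_hatM_mirror hL hm i (show a ≤ 2*n by omega)])
    _ ↔ admC n L m :=
        ⟨fun h a i h1 h2 hi => h a h1 h2 i hi, fun h a h1 h2 i hi => h a i h1 h2 hi⟩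

theorem rigA_hatM_mid_iff (hL : supIn n L) (hm : supIn n m) :
    (∀ i, 1 ≤ i → (hatJ n J (n, i)).card ≤ hatM n m (n, i) ∧
        ∀ x ∈ hatJ n J (n, i), 0 < x ∧ (x : ℚ) ≤ vacA (hatM n L) (hatM n m) n i) ↔
      ∀ i, 1 ≤ i → (J (n, i)).card ≤ m (n, i) ∧
        ∀ x ∈ J (n, i), 0 < x ∧ (x : ℚ) ≤ vacC n L m n i := by
  simp only [coe_hatJ, coe_hatM]
  constructor
  · intro h i hi
    obtain ⟨hcard, hparts⟩ := h (2 * i) (by omega)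
    rw [hatFun_mid, hatFun_mid, Multiset.card_map, vacA_hatM_mid hL hm] at *
    refine ⟨hcard, fun x hx => ?_⟩
    have := hparts (2 * x) (Multiset.mem_map_of_mem _ hx)
    push_cast at this
    exact ⟨by omega, by linarith⟩
  · intro h i hi
    obtain ⟨k, rfl | rfl⟩ := Nat.even_or_odd' i
    · obtain ⟨hcard, hparts⟩ := h k (by omega)
      rw [hatFun_mid, hatFun_mid, Multiset.card_map, vacA_hatM_mid hL hm]
      refine ⟨hcard, fun x hx => ?_⟩
      obtain ⟨y, hy, rfl⟩ := Multiset.mem_map.1 hx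
      have := hparts y hy
      push_cast
      exact ⟨by omega, by linarith⟩
    · rw [hatFun_mid_odd (by omega), hatFun_mid_odd (by omega)]
      simp

theorem rigA_hatM_iff (hn : 1 ≤ n) (hL : supIn n L) (hm : supIn n m) :
    rigA (2*n - 1) (hatM n L) (hatM n m) (hatJ n J) ↔ rigC n L m J :=
  calc _ ↔ ∀ a, 1 ≤ a → a ≤ 2*n - 1 → ∀ i, 1 ≤ i → (hatJ n J (a, i)).card ≤ hatM n m (a, i) ∧
          ∀ x ∈ hatJ n J (a, i), 0 < x ∧ (x : ℚ) ≤ vacA (hatM n L) (hatM n m) a i :=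
        ⟨fun h a h1 h2 i hi => h a i h1 h2 hi, fun h a i h1 h2 hi => h a h1 h2 i hi⟩
    _ ↔ ∀ a, 1 ≤ a → a ≤ n → ∀ i, 1 ≤ i → (J (a, i)).card ≤ m (a, i) ∧
          ∀ x ∈ J (a, i), 0 < x ∧ (x : ℚ) ≤ vacC n L m a i :=
        forall_rowsA_iff hn
          (fun a h1 h2 => by
            simp only [coe_hatJ, coe_hatM, hatFun_of_lt _ h1 h2, vacA_hatM_of_lt hL hm _ h1 h2])
          (rigA_hatM_mid_iff hL hm)
          (fun a h1 h2 => by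
            simp only [coe_hatJ, coe_hatM, hatFun_mirror _ h1 h2,
              fun i => vacA_hatM_mirror hL hm i (show a ≤ 2*n by omega)])
    _ ↔ rigC n L m J :=
        ⟨fun h a i h1 h2 hi => h a h1 h2 i hi, fun h a h1 h2 i hi => h a i h1 h2 hi⟩

end Conditions

section Bijection

variable {n : ℕ} {lam : ℕ → ℕ} {L : Mat}

theorem hat_mem_RCv_iff (hn : 1 ≤ n) (hL : supIn n L) {p : Mat × Rig} (hm : supIn n p.1)
    (hJ : supInJ n p.2) : (hatM n p.1, hatJ n p.2) ∈ RCv n lam L ↔ p ∈ RCC n lam L := by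
  have hsuppM : supIn (2*n - 1) (hatM n p.1) := hatFun_support (φ := id) rfl hm
  have hsuppJ : supInJ (2*n - 1) (hatJ n p.2) :=
    hatFun_support (φ := Multiset.map (2 * ·)) (Multiset.map_zero _) hJ
  have hsymm : ∀ a i, 1 ≤ a → a ≤ n - 1 →
      hatM n p.1 (a, i) = hatM n p.1 (2*n - a, i) ∧ hatJ n p.2 (a, i) = hatJ n p.2 (2*n - a, i) :=
    fun a i h1 h2 => by
      simp only [coe_hatM, coe_hatJ, hatFun_mirror i h1 (show a < n by omega), and_self]
  have hodd : ∀ j, j % 2 = 1 → hatM n p.1 (n, j) = 0 := fun j hj => hatFun_mid_odd (φ := id) hj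
  have heven : ∀ i, ∀ x ∈ hatJ n p.2 (n, i), x % 2 = 0 := by
    intro i x hx
    rw [coe_hatJ] at hx
    obtain ⟨k, rfl | rfl⟩ := Nat.even_or_odd' i
    · rw [hatFun_mid] at hx
      obtain ⟨y, -, rfl⟩ := Multiset.mem_map.1 hx
      omega
    · rw [hatFun_mid_odd (by omega)] at hx
      exact absurd hx (Multiset.notMem_zero x)
  constructor
  · rintro ⟨-, -, hc, ha, hr, -⟩
    exact ⟨hm, hJ, (configA_hatM_iff hn lam hL hm).1 hc, (admA_hatM_iff hn hL hm).1 ha,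
      (rigA_hatM_iff hn hL hm).1 hr⟩
  · rintro ⟨-, -, hc, ha, hr⟩
    exact ⟨hsuppM, hsuppJ, (configA_hatM_iff hn lam hL hm).2 hc, (admA_hatM_iff hn hL hm).2 ha,
      (rigA_hatM_iff hn hL hm).2 hr, hsymm, hodd, heven⟩

noncomputable def unHatPair (n : ℕ) (p : Mat × Rig) : Mat × Rig :=
  (unHat n id rfl p.1, unHat n (Multiset.map (· / 2)) (Multiset.map_zero _) p.2)

theorem unHatPair_hat {p : Mat × Rig} (hm : supIn n p.1) (hJ : supInJ n p.2) :
    unHatPair n (hatM n p.1, hatJ n p.2) = p := by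
  refine Prod.ext (unHat_hatFun (hψ := rfl) _ _ (coe_hatM p.1) (fun _ => rfl) (fst_bounds hm))
    (unHat_hatFun (hψ := Multiset.map_zero _) _ _ (coe_hatJ p.2) (fun s => ?_) (fst_bounds hJ))
  rw [Multiset.map_map]
  exact (Multiset.map_congr rfl fun x _ => by simp).trans (Multiset.map_id s)

theorem supIn_unHatPair {p' : Mat × Rig} (hp' : p' ∈ RCv n lam L) :
    supIn n (unHatPair n p').1 ∧ supInJ n (unHatPair n p').2 :=
  ⟨unHat_support (hψ := rfl) _ hp'.1, unHat_support (hψ := Multiset.map_zero _) _ hp'.2.1⟩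

theorem hat_unHatPair (hn : 1 ≤ n) {p' : Mat × Rig} (hp' : p' ∈ RCv n lam L) :
    (hatM n (unHatPair n p').1, hatJ n (unHatPair n p').2) = p' := by
  obtain ⟨hm', hJ', -, -, hr', hsymm', hodd', heven'⟩ := hp'
  have hoddJ : ∀ j, j % 2 = 1 → p'.2 (n, j) = 0 := fun j hj => by
    have := (hr' n j hn (by omega) (by omega)).1
    rwa [hodd' j hj, Nat.le_zero, Multiset.card_eq_zero] at this
  refine Prod.ext (DFunLike.coe_injective ?_) (DFunLike.coe_injective ?_)
  · exact (coe_hatM _).trans (hatFun_unHat (hψ := rfl) _ (fst_bounds hm')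
      (fun a i h1 h2 => (hsymm' a i h1 h2).1) hodd' fun _ => rfl)
  · refine (coe_hatJ _).trans (hatFun_unHat (hψ := Multiset.map_zero _) _ (fst_bounds hJ')
      (fun a i h1 h2 => (hsymm' a i h1 h2).2) hoddJ fun i => ?_)
    rw [Multiset.map_map]
    refine (Multiset.map_congr rfl fun x hx => ?_).trans (Multiset.map_id _)
    have := heven' _ x hx
    simp only [Function.comp_apply, id]
    omega

end Bijection

theorem statement15 (n : ℕ) (hn : 2 ≤ n) (lam : ℕ → ℕ) (L : Mat) (hL : supIn n L) :
    Set.BijOn (fun p : Mat × Rig => (hatM n p.1, hatJ n p.2)) (RCC n lam L)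
      (RCv n lam L) ∧
    ∀ p ∈ RCC n lam L,
      ccA (hatM n p.1) + Jsize (hatJ n p.2) = 2 * (ccC n p.1 + Jsize p.2) := by
  have hn : 1 ≤ n := by omega
  refine ⟨⟨fun p hp => (hat_mem_RCv_iff hn hL hp.1 hp.2.1).2 hp, fun p hp p' hp' h => ?_,
    fun p' hp' => ?_⟩, fun p hp => ?_⟩
  · rw [← unHatPair_hat hp.1 hp.2.1, ← unHatPair_hat hp'.1 hp'.2.1]
    exact congrArg (unHatPair n) h
  · obtain ⟨hm, hJ⟩ := supIn_unHatPair hp'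
    refine ⟨unHatPair n p', (hat_mem_RCv_iff hn hL hm hJ).1 ?_, hat_unHatPair hn hp'⟩
    rwa [hat_unHatPair hn hp']
  · rw [ccA_hatM hp.1, Jsize_hatJ hp.2.1]
    ring

end Stmt15
end
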